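/- arXiv:2301.11442 — 4 statements merged into one kernel-verified Lean document; each statement's English description precedes it below -/
import Mathlib

section
/- Fix an integer L ≥ 1, an integer ℓ with 1 ≤ ℓ ≤ L, and two instances A, B ∈ 𝓘_ℓ. Let γ_n = γ_{n−1} followed by a final pair (j_n, o_n) be a transcript of length n such that g_A(γ_n) > 0 and g_B(γ_n) > 0. Then |ln(g_A(γ_n)/g_B(γ_n)) − ln(g_A(γ_{n−1})/g_B(γ_{n−1}))| ≤ 5/4^ℓ. -/
/-- The family `𝓘_ℓ` of hard two-armed Bernoulli instances (given by their
mean vectors `μ : Fin 2 → ℝ`): for some `ℓ ≤ ℓ' ≤ L` and sign `σ ∈ {+1,−1}`,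
arm `1` has mean `1/2 + σ/4^{ℓ'}` and arm `2` has mean `1/2 − σ/4^{ℓ'}`. -/
def hardFamily (L ℓ : ℕ) : Set (Fin 2 → ℝ) :=
  { μ | ∃ ℓ' : ℕ, ℓ ≤ ℓ' ∧ ℓ' ≤ L ∧ ∃ σ : ℝ, (σ = 1 ∨ σ = -1) ∧
      μ 0 = 1/2 + σ / 4 ^ ℓ' ∧ μ 1 = 1/2 - σ / 4 ^ ℓ' }

/-- `g_I(γ)`: the probability of observing the reward sequence of the
transcript `γ` (a list of pairs (arm index, Boolean reward)) when pulling the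
arms of the instance with means `μ` along the arm-index sequence of `γ`. -/
def gI (μ : Fin 2 → ℝ) (γ : List (Fin 2 × Bool)) : ℝ :=
  (γ.map (fun p => if p.2 then μ p.1 else 1 - μ p.1)).prod

lemma factor_bounds (L ℓ : ℕ) (μ : Fin 2 → ℝ) (hμ : μ ∈ hardFamily L ℓ)
    (j : Fin 2) (o : Bool) :
    1/2 - 1/4^ℓ ≤ (if o then μ j else 1 - μ j) ∧
      (if o then μ j else 1 - μ j) ≤ 1/2 + 1/4^ℓ := by
  obtain ⟨ℓ', hle, -, σ, hσ, h0, h1⟩ := hμ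
  have hp : ((4:ℝ)^ℓ')⁻¹ ≤ ((4:ℝ)^ℓ)⁻¹ := by
    apply inv_anti₀ (by positivity)
    exact pow_le_pow_right₀ (by norm_num) hle
  have hp0 : (0:ℝ) < ((4:ℝ)^ℓ')⁻¹ := by positivity
  have hj : j = 0 ∨ j = 1 := by fin_cases j <;> simp
  rcases hj with hj | hj <;> subst hj <;> cases o <;> rcases hσ with hσ | hσ <;>
    simp only [hσ, h0, h1, if_true, if_false, Bool.false_eq_true, neg_div, one_div] <;>
    constructor <;> nlinarith

lemma key_log (ℓ : ℕ) (h : 1 ≤ ℓ) :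
    Real.log (1/2 + 1/4^ℓ) - Real.log (1/2 - 1/4^ℓ) ≤ 5/4^ℓ := by
  rcases eq_or_lt_of_le h with h1 | h2
  · -- ℓ = 1
    subst h1
    have e : Real.log (1/2 + 1/4^(1:ℕ)) - Real.log (1/2 - 1/4^(1:ℕ)) = Real.log 3 := by
      rw [show (1:ℝ)/2 + 1/4^(1:ℕ) = 3 * (1/4) by norm_num,
          show (1:ℝ)/2 - 1/4^(1:ℕ) = 1/4 by norm_num,
          Real.log_mul (by norm_num) (by norm_num)]
      ring
    rw [e]
    have h3 : Real.log 3 ≤ 5/4 := by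
      rw [Real.log_le_iff_le_exp (by norm_num)]
      have ha : (1:ℝ) + 1/4 ≤ Real.exp (1/4) := by
        have := Real.add_one_le_exp ((1:ℝ)/4); linarith
      have hb : (2.7182818283:ℝ) < Real.exp 1 := Real.exp_one_gt_d9
      have he : Real.exp (5/4 : ℝ) = Real.exp 1 * Real.exp (1/4) := by
        rw [← Real.exp_add]; norm_num
      rw [he]
      nlinarith [Real.exp_pos (1:ℝ), Real.exp_pos ((1:ℝ)/4)]
    norm_num
    linarith
  · -- ℓ ≥ 2
    set t : ℝ := 1/4^ℓ with ht
    have ht0 : 0 < t := by positivity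
    have ht16 : t ≤ 1/16 := by
      rw [ht]
      apply div_le_div_of_nonneg_left (by norm_num) (by norm_num)
      calc (16:ℝ) = 4^2 := by norm_num
        _ ≤ 4^ℓ := pow_le_pow_right₀ (by norm_num) h2
    have hb : (0:ℝ) < 1/2 - t := by linarith
    have ha : (0:ℝ) < 1/2 + t := by linarith
    have hlog := Real.log_le_sub_one_of_pos (show (0:ℝ) < (1/2+t)/(1/2-t) from div_pos ha hb)
    rw [Real.log_div (ne_of_gt ha) (ne_of_gt hb)] at hlog
    have hfrac : (1/2+t)/(1/2-t) - 1 ≤ 5*t := by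
      rw [div_sub_one (ne_of_gt hb), div_le_iff₀ hb]
      nlinarith
    calc Real.log (1/2+t) - Real.log (1/2-t) ≤ (1/2+t)/(1/2-t) - 1 := hlog
      _ ≤ 5*t := hfrac
      _ = 5/4^ℓ := by rw [ht]; ring

/-- Fix `1 ≤ ℓ ≤ L` and `A, B ∈ 𝓘_ℓ`. If `γₙ = γₙ₋₁ ++ [(jₙ, oₙ)]` is a
transcript with `g_A(γₙ) > 0` and `g_B(γₙ) > 0`, then
`|ln(g_A(γₙ)/g_B(γₙ)) − ln(g_A(γₙ₋₁)/g_B(γₙ₋₁))| ≤ 5/4^ℓ`. -/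
theorem abs_log_ratio_increment_le (L ℓ : ℕ) (hℓ1 : 1 ≤ ℓ) (hℓL : ℓ ≤ L)
    (A B : Fin 2 → ℝ) (hA : A ∈ hardFamily L ℓ) (hB : B ∈ hardFamily L ℓ)
    (γ : List (Fin 2 × Bool)) (jo : Fin 2 × Bool)
    (hgA : 0 < gI A (γ ++ [jo])) (hgB : 0 < gI B (γ ++ [jo])) :
    |Real.log (gI A (γ ++ [jo]) / gI B (γ ++ [jo]))
        - Real.log (gI A γ / gI B γ)| ≤ 5 / 4 ^ ℓ := by
  have hsplit : ∀ μ : Fin 2 → ℝ, gI μ (γ ++ [jo]) =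
      gI μ γ * (if jo.2 then μ jo.1 else 1 - μ jo.1) := by
    intro μ
    simp [gI, List.map_append, List.prod_append]
  set fA : ℝ := (if jo.2 then A jo.1 else 1 - A jo.1) with hfA
  set fB : ℝ := (if jo.2 then B jo.1 else 1 - B jo.1) with hfB
  -- bounds on 1/4^ℓ
  have hqpos : (0:ℝ) < 1/4^ℓ := by positivity
  have hq : (1:ℝ)/4^ℓ ≤ 1/4 := by
    apply div_le_div_of_nonneg_left (by norm_num) (by norm_num)
    calc (4:ℝ) = 4^1 := by norm_num
      _ ≤ 4^ℓ := pow_le_pow_right₀ (by norm_num) hℓ1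
  obtain ⟨hA1, hA2⟩ := factor_bounds L ℓ A hA jo.1 jo.2
  obtain ⟨hB1, hB2⟩ := factor_bounds L ℓ B hB jo.1 jo.2
  rw [← hfA] at hA1 hA2
  rw [← hfB] at hB1 hB2
  have hfA0 : 0 < fA := by linarith
  have hfB0 : 0 < fB := by linarith
  rw [hsplit A] at hgA
  rw [hsplit B] at hgB
  have hgA0 : 0 < gI A γ := by
    by_contra hc
    push_neg at hc
    nlinarith
  have hgB0 : 0 < gI B γ := by
    by_contra hc
    push_neg at hc
    nlinarith
  have e1 : Real.log (gI A γ * fA / (gI B γ * fB)) - Real.log (gI A γ / gI B γ)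
      = Real.log fA - Real.log fB := by
    rw [Real.log_div (by positivity) (by positivity),
        Real.log_div (ne_of_gt hgA0) (ne_of_gt hgB0),
        Real.log_mul (ne_of_gt hgA0) (ne_of_gt hfA0),
        Real.log_mul (ne_of_gt hgB0) (ne_of_gt hfB0)]
    ring
  rw [hsplit A, hsplit B, ← hfA, ← hfB, e1]
  have hlo : (0:ℝ) < 1/2 - 1/4^ℓ := by linarith
  have key := key_log ℓ hℓ1
  have hA_up : Real.log fA ≤ Real.log (1/2 + 1/4^ℓ) := Real.log_le_log hfA0 hA2
  have hA_lo : Real.log (1/2 - 1/4^ℓ) ≤ Real.log fA := Real.log_le_log hlo hA1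
  have hB_up : Real.log fB ≤ Real.log (1/2 + 1/4^ℓ) := Real.log_le_log hfB0 hB2
  have hB_lo : Real.log (1/2 - 1/4^ℓ) ≤ Real.log fB := Real.log_le_log hlo hB1
  rw [abs_le]
  constructor <;> linarith
end

section
/- Fix an integer L ≥ 1, an integer ℓ with 1 ≤ ℓ ≤ L, and instances A, B, I ∈ 𝓘_ℓ. Then for each arm j ∈ {1,2}, μ_j(I) · ln(μ_j(A)/μ_j(B)) + (1 − μ_j(I)) · ln((1 − μ_j(A))/(1 − μ_j(B))) ≤ 11/16^ℓ. (This is the expected one-step increment of the log-likelihood ratio ln(g_A/g_B) when the reward is drawn from arm j of instance I.) -/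
lemma two_log_le_aux (s : ℝ) (hs : 1 ≤ s) : 2 * Real.log s ≤ s - 1/s := by
  have hs0 : (0:ℝ) < s := by linarith
  have h := (Real.self_le_sinh_iff (x := Real.log s)).2 (Real.log_nonneg hs)
  rw [Real.sinh_eq, Real.exp_log hs0, Real.exp_neg, Real.exp_log hs0] at h
  have : s⁻¹ = 1/s := by rw [one_div]
  linarith [h]

lemma log_ratio_le {a : ℝ} (h0 : 0 ≤ a) (h1 : a ≤ 1/4) :
    Real.log (1/2 + a) - Real.log (1/2 - a) ≤ 24/5 * a := by
  have hm : (0:ℝ) < 1/2 - a := by linarith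
  have hp : (0:ℝ) < 1/2 + a := by linarith
  have hne : (1/2 - a) ≠ 0 := ne_of_gt hm
  set t : ℝ := (1/2 + a) / (1/2 - a) with ht
  have ht1 : 1 ≤ t := by
    rw [ht, le_div_iff₀ hm]; linarith
  have ht0 : (0:ℝ) < t := by linarith
  set s : ℝ := Real.sqrt t with hsdef
  have hss : s * s = t := Real.mul_self_sqrt (le_of_lt ht0)
  have hs1 : 1 ≤ s := by nlinarith [Real.sqrt_nonneg t]
  have hs0 : (0:ℝ) < s := by linarith
  have h5 : (0:ℝ) < 5 / (12 * (1/2 - a)) := by positivity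
  have hlb : 5 / (12 * (1/2 - a)) ≤ s := by
    rw [hsdef, show (5:ℝ) / (12 * (1/2 - a)) = Real.sqrt ((5 / (12 * (1/2 - a)))^2) from
      (Real.sqrt_sq (le_of_lt h5)).symm]
    apply Real.sqrt_le_sqrt
    rw [div_pow, ht, div_le_div_iff₀ (by positivity) hm]
    have key : (0:ℝ) ≤ (1/2 - a) * (144 * ((1/2 - a) * (1/2 + a)) - 25) :=
      mul_nonneg (le_of_lt hm) (by nlinarith)
    nlinarith [key]
  have hlog : Real.log t = 2 * Real.log s := by
    rw [hsdef, Real.log_sqrt (le_of_lt ht0)]; ring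
  have h2 : Real.log t ≤ s - 1/s := by
    rw [hlog]; exact two_log_le_aux s hs1
  have h1s : 1/s ≤ 12 * (1/2 - a) / 5 := by
    have := one_div_le_one_div_of_le h5 hlb
    rwa [one_div_div] at this
  have hfrac : s - 1/s = (t - 1) * (1/s) := by
    rw [← hss]; field_simp
  have htm : t - 1 = 2 * a / (1/2 - a) := by
    rw [ht, div_sub_one hne]; congr 1; ring
  have htm0 : 0 ≤ t - 1 := by linarith
  have h3 : s - 1/s ≤ 24/5 * a := by
    rw [hfrac]
    calc (t - 1) * (1/s) ≤ (t - 1) * (12 * (1/2 - a) / 5) :=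
          mul_le_mul_of_nonneg_left h1s htm0
      _ = 24/5 * a := by
            rw [htm]
            rw [show 2 * a / (1/2 - a) * (12 * (1/2 - a) / 5)
                = (24/5 * a) * ((1/2 - a) / (1/2 - a)) by ring]
            rw [div_self hne, mul_one]
  calc Real.log (1/2 + a) - Real.log (1/2 - a)
      = Real.log t := (Real.log_div (ne_of_gt hp) hne).symm
    _ ≤ s - 1/s := h2
    _ ≤ 24/5 * a := h3

lemma abs_log_ratio {x : ℝ} (h : |x - 1/2| ≤ 1/4) :
    |Real.log x - Real.log (1 - x)| ≤ 24/5 * |x - 1/2| := by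
  rw [abs_le] at h
  rcases le_or_gt (1/2) x with hx | hx
  · have ha0 : 0 ≤ x - 1/2 := by linarith
    have key := log_ratio_le ha0 (by linarith)
    have e1 : 1/2 + (x - 1/2) = x := by ring
    have e2 : 1/2 - (x - 1/2) = 1 - x := by ring
    rw [e1, e2] at key
    have hmono : Real.log (1 - x) ≤ Real.log x :=
      Real.log_le_log (by linarith) (by linarith)
    rw [abs_of_nonneg ha0, abs_of_nonneg (by linarith : (0:ℝ) ≤ Real.log x - Real.log (1-x))]
    exact key
  · have ha0 : 0 ≤ 1/2 - x := by linarith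
    have key := log_ratio_le ha0 (by linarith)
    have e1 : 1/2 + (1/2 - x) = 1 - x := by ring
    have e2 : 1/2 - (1/2 - x) = x := by ring
    rw [e1, e2] at key
    have hmono : Real.log x ≤ Real.log (1 - x) :=
      Real.log_le_log (by linarith) (by linarith)
    rw [abs_of_nonpos (by linarith : x - 1/2 ≤ 0),
      abs_of_nonpos (by linarith : Real.log x - Real.log (1-x) ≤ 0)]
    linarith

lemma mem_hardFamily_bound {L ℓ : ℕ} {μ : Fin 2 → ℝ} (h : μ ∈ hardFamily L ℓ)
    (j : Fin 2) : |μ j - 1/2| ≤ 1 / 4 ^ ℓ := by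
  obtain ⟨ℓ', hℓ', _, σ, hσ, h0, h1⟩ := h
  have h4 : (4:ℝ) ^ ℓ ≤ 4 ^ ℓ' := pow_le_pow_right₀ (by norm_num) hℓ'
  have h4p : (0:ℝ) < 4 ^ ℓ := by positivity
  have h4p' : (0:ℝ) < (4:ℝ) ^ ℓ' := by positivity
  have hle : (1:ℝ) / 4 ^ ℓ' ≤ 1 / 4 ^ ℓ := one_div_le_one_div_of_le h4p h4
  have habs : |σ / 4 ^ ℓ'| = 1 / 4 ^ ℓ' := by
    rcases hσ with rfl | rfl
    · rw [abs_div, abs_of_pos h4p']; norm_num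
    · rw [abs_div, abs_of_pos h4p']; norm_num
  fin_cases j
  · show |μ 0 - 1/2| ≤ 1 / 4 ^ ℓ
    rw [h0, show (1:ℝ)/2 + σ / 4 ^ ℓ' - 1/2 = σ / 4 ^ ℓ' by ring, habs]
    exact hle
  · show |μ 1 - 1/2| ≤ 1 / 4 ^ ℓ
    rw [h1, show (1:ℝ)/2 - σ / 4 ^ ℓ' - 1/2 = -(σ / 4 ^ ℓ') by ring, abs_neg, habs]
    exact hle


set_option maxHeartbeats 1000000 in
/-- Fix `1 ≤ ℓ ≤ L` and instances `A, B, I ∈ 𝓘_ℓ`. For each arm `j`, the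
expected one-step increment of the log-likelihood ratio,
`μ_j(I)·ln(μ_j(A)/μ_j(B)) + (1 − μ_j(I))·ln((1 − μ_j(A))/(1 − μ_j(B)))`,
is at most `11/16^ℓ`. -/
theorem expected_log_ratio_increment_le (L ℓ : ℕ) (hℓ1 : 1 ≤ ℓ) (hℓL : ℓ ≤ L)
    (A B I : Fin 2 → ℝ) (hA : A ∈ hardFamily L ℓ) (hB : B ∈ hardFamily L ℓ)
    (hI : I ∈ hardFamily L ℓ) (j : Fin 2) :
    I j * Real.log (A j / B j) + (1 - I j) * Real.log ((1 - A j) / (1 - B j))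
      ≤ 11 / 16 ^ ℓ := by
  have ha := mem_hardFamily_bound hA j
  have hb := mem_hardFamily_bound hB j
  have hi := mem_hardFamily_bound hI j
  set ε : ℝ := 1 / 4 ^ ℓ with hε
  have hε0 : (0:ℝ) < ε := by positivity
  have hε4 : ε ≤ 1/4 := by
    rw [hε]
    have h44 : (4:ℝ) ≤ 4 ^ ℓ := by
      calc (4:ℝ) = 4 ^ 1 := by norm_num
        _ ≤ 4 ^ ℓ := pow_le_pow_right₀ (by norm_num) hℓ1
    rw [div_le_div_iff₀ (by positivity) (by norm_num)]; linarith
  set x : ℝ := A j with hxdef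
  set y : ℝ := B j with hydef
  set p : ℝ := I j with hpdef
  have hax := abs_le.1 ha
  have hby := abs_le.1 hb
  have hip := abs_le.1 hi
  have hx0 : (0:ℝ) < x := by linarith [hax.1]
  have hy0 : (0:ℝ) < y := by linarith [hby.1]
  have hx1 : (0:ℝ) < 1 - x := by linarith [hax.2]
  have hy1 : (0:ℝ) < 1 - y := by linarith [hby.2]
  rw [Real.log_div (ne_of_gt hx0) (ne_of_gt hy0),
    Real.log_div (ne_of_gt hx1) (ne_of_gt hy1)]
  set Lx : ℝ := Real.log x
  set Ly : ℝ := Real.log y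
  set Lx1 : ℝ := Real.log (1 - x)
  set Ly1 : ℝ := Real.log (1 - y)
  have hdecomp : p * (Lx - Ly) + (1 - p) * (Lx1 - Ly1)
      = (1/2) * ((Lx + Lx1) - (Ly + Ly1)) + (p - 1/2) * ((Lx - Lx1) - (Ly - Ly1)) := by
    ring
  rw [hdecomp]
  have hSsum : Lx + Lx1 = Real.log (x * (1 - x)) :=
    (Real.log_mul (ne_of_gt hx0) (ne_of_gt hx1)).symm
  have hSsum' : Ly + Ly1 = Real.log (y * (1 - y)) :=
    (Real.log_mul (ne_of_gt hy0) (ne_of_gt hy1)).symm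
  have ha2 : (x - 1/2)^2 ≤ ε^2 := by nlinarith [hax.1, hax.2]
  have hb2 : (y - 1/2)^2 ≤ ε^2 := by nlinarith [hby.1, hby.2]
  have hε2 : ε^2 ≤ 1/16 := by nlinarith
  have hQ : (3:ℝ)/16 ≤ y * (1 - y) := by nlinarith
  have hP0 : (0:ℝ) < x * (1 - x) := mul_pos hx0 hx1
  have hQ0 : (0:ℝ) < y * (1 - y) := mul_pos hy0 hy1
  have hS : (Lx + Lx1) - (Ly + Ly1) ≤ 16/3 * (ε^2 - (x - 1/2)^2) := by
    rw [hSsum, hSsum']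
    rcases le_or_gt (x * (1 - x)) (y * (1 - y)) with hc | hc
    · have hlg : Real.log (x * (1 - x)) ≤ Real.log (y * (1 - y)) :=
        Real.log_le_log hP0 hc
      nlinarith
    · have hlog2 : Real.log (x * (1 - x)) - Real.log (y * (1 - y))
          = Real.log ((x * (1 - x)) / (y * (1 - y))) :=
        (Real.log_div (ne_of_gt hP0) (ne_of_gt hQ0)).symm
      have hle : Real.log ((x * (1 - x)) / (y * (1 - y)))
          ≤ (x * (1 - x)) / (y * (1 - y)) - 1 :=
        Real.log_le_sub_one_of_pos (by positivity)
      have hdiff : (x * (1 - x)) / (y * (1 - y)) - 1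
          = ((x * (1 - x)) - (y * (1 - y))) / (y * (1 - y)) := by
        field_simp
      have hnum0 : 0 ≤ (x * (1 - x)) - (y * (1 - y)) := by linarith
      have hfrac : ((x * (1 - x)) - (y * (1 - y))) / (y * (1 - y))
          ≤ ((x * (1 - x)) - (y * (1 - y))) * (16/3) := by
        rw [div_le_iff₀ hQ0]
        nlinarith
      have hnum : (x * (1 - x)) - (y * (1 - y)) = (y - 1/2)^2 - (x - 1/2)^2 := by ring
      rw [hlog2]
      calc Real.log ((x * (1 - x)) / (y * (1 - y)))
          ≤ ((x * (1 - x)) - (y * (1 - y))) / (y * (1 - y)) := by rw [← hdiff]; exact hle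
        _ ≤ ((x * (1 - x)) - (y * (1 - y))) * (16/3) := hfrac
        _ ≤ 16/3 * (ε^2 - (x - 1/2)^2) := by nlinarith
  have hDx : |Lx - Lx1| ≤ 24/5 * |x - 1/2| := abs_log_ratio (le_trans ha hε4)
  have hDy : |Ly - Ly1| ≤ 24/5 * |y - 1/2| := abs_log_ratio (le_trans hb hε4)
  have hD : (p - 1/2) * ((Lx - Lx1) - (Ly - Ly1)) ≤ ε * (24/5 * |x - 1/2| + 24/5 * ε) := by
    have step1 : (p - 1/2) * ((Lx - Lx1) - (Ly - Ly1))
        ≤ |p - 1/2| * |(Lx - Lx1) - (Ly - Ly1)| := by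
      calc (p - 1/2) * ((Lx - Lx1) - (Ly - Ly1))
          ≤ |(p - 1/2) * ((Lx - Lx1) - (Ly - Ly1))| := le_abs_self _
        _ = |p - 1/2| * |(Lx - Lx1) - (Ly - Ly1)| := abs_mul _ _
    have habs2 : |(Lx - Lx1) - (Ly - Ly1)| ≤ 24/5 * |x - 1/2| + 24/5 * ε := by
      calc |(Lx - Lx1) - (Ly - Ly1)| ≤ |Lx - Lx1| + |Ly - Ly1| := abs_sub _ _
        _ ≤ 24/5 * |x - 1/2| + 24/5 * ε := by
            have hyb : |y - 1/2| ≤ ε := hb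
            linarith
    have h1 : (0:ℝ) ≤ |(Lx - Lx1) - (Ly - Ly1)| := abs_nonneg _
    have h2 : (0:ℝ) ≤ 24/5 * |x - 1/2| + 24/5 * ε := by positivity
    calc (p - 1/2) * ((Lx - Lx1) - (Ly - Ly1))
        ≤ |p - 1/2| * |(Lx - Lx1) - (Ly - Ly1)| := step1
      _ ≤ ε * (24/5 * |x - 1/2| + 24/5 * ε) := by
          apply mul_le_mul hi habs2 h1 (le_of_lt hε0)
  have hfin : (1/2) * (16/3 * (ε^2 - (x - 1/2)^2)) + ε * (24/5 * |x - 1/2| + 24/5 * ε)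
      ≤ 11 * ε^2 := by
    have hu : |x - 1/2| ≤ ε := ha
    have hu0 : 0 ≤ |x - 1/2| := abs_nonneg _
    have hsq : (x - 1/2)^2 = |x - 1/2|^2 := (sq_abs _).symm
    rw [hsq]
    nlinarith [sq_nonneg (10 * |x - 1/2| - 9 * ε)]
  have h16 : 11 * ε^2 = 11 / 16 ^ ℓ := by
    rw [hε, show (16:ℝ) = 4 * 4 by norm_num, mul_pow, div_pow]
    ring
  linarith [hS, hD, hfin]
end

section
/- Let d be a real number with 0 < d ≤ 1/4, and let δ_A, δ_B, δ_I be real numbers with |δ_A| ≤ d, |δ_B| ≤ d, |δ_I| ≤ d. Then (1/2 + δ_I) · ln((1 + 2δ_A)/(1 + 2δ_B)) + (1/2 − δ_I) · ln((1 − 2δ_A)/(1 − 2δ_B)) ≤ 11 d². -/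
set_option maxHeartbeats 1000000

lemma log_diff_bound (x : ℝ) (hx : |x| ≤ 1/2) :
    |Real.log (1+x) - Real.log (1-x) - (2*x + 2/3*x^3)| ≤ 4*|x|^5 := by
  have hx1 : |x| < 1 := lt_of_le_of_lt hx (by norm_num)
  have hx1' : |(-x)| < 1 := by rwa [abs_neg]
  have h1 := Real.abs_log_sub_add_sum_range_le hx1 4
  have h2 := Real.abs_log_sub_add_sum_range_le hx1' 4
  simp [Finset.sum_range_succ] at h1 h2
  have hb : |x|^5 / (1-|x|) ≤ 2*|x|^5 := by
    rw [div_le_iff₀ (by linarith)]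
    nlinarith [pow_nonneg (abs_nonneg x) 5]
  have key : Real.log (1+x) - Real.log (1-x) - (2*x + 2/3*x^3)
      = (-x + x ^ 2 / (1 + 1) + (-x) ^ 3 / (2 + 1) + (-x) ^ 4 / (3 + 1) + Real.log (1 + x))
        - (x + x ^ 2 / (1 + 1) + x ^ 3 / (2 + 1) + x ^ 4 / (3 + 1) + Real.log (1 - x)) := by
    ring
  rw [key]
  calc |_ - _| ≤ |(-x + x ^ 2 / (1 + 1) + (-x) ^ 3 / (2 + 1) + (-x) ^ 4 / (3 + 1) + Real.log (1 + x))|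
      + |(x + x ^ 2 / (1 + 1) + x ^ 3 / (2 + 1) + x ^ 4 / (3 + 1) + Real.log (1 - x))| := abs_sub _ _
    _ ≤ 4*|x|^5 := by linarith

lemma log_sum_le (x : ℝ) (hx : |x| ≤ 1/2) :
    Real.log (1+x) + Real.log (1-x) ≤ -x^2 := by
  have h1 : (0:ℝ) < 1 + x := by cases abs_le.1 hx; linarith
  have h2 : (0:ℝ) < 1 - x := by cases abs_le.1 hx; linarith
  rw [← Real.log_mul (ne_of_gt h1) (ne_of_gt h2)]
  have := Real.log_le_sub_one_of_pos (mul_pos h1 h2)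
  nlinarith

lemma log_sum_ge (x : ℝ) (hx : |x| ≤ 1/2) :
    -x^2 - 4/3*x^4 ≤ Real.log (1+x) + Real.log (1-x) := by
  have h1 : (0:ℝ) < 1 + x := by cases abs_le.1 hx; linarith
  have h2 : (0:ℝ) < 1 - x := by cases abs_le.1 hx; linarith
  rw [← Real.log_mul (ne_of_gt h1) (ne_of_gt h2)]
  have hp : (0:ℝ) < (1+x)*(1-x) := mul_pos h1 h2
  have hinv := Real.log_le_sub_one_of_pos (inv_pos.2 hp)
  rw [Real.log_inv] at hinv
  have hx2 : x^2 ≤ 1/4 := by nlinarith [abs_nonneg x, sq_abs x]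
  have hq : ((1+x)*(1-x))⁻¹ ≤ 1 + x^2 + 4/3*x^4 := by
    rw [inv_le_iff_one_le_mul₀ hp]
    nlinarith [pow_nonneg (sq_nonneg x) 2, mul_le_mul_of_nonneg_left hx2 (pow_nonneg (sq_nonneg x) 2)]
  linarith

/-- Pure arithmetic core: abstract values `l1..l4` standing for the four logs. -/
lemma core_arith (d δA δB δI l1 l2 l3 l4 : ℝ) (hd0 : 0 < d) (hd1 : d ≤ 1/4)
    (hA : |δA| ≤ d) (hB : |δB| ≤ d) (hI : |δI| ≤ d)
    (hPA : l1 + l2 ≤ -(2*δA)^2)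
    (hPB : -(2*δB)^2 - 4/3*(2*δB)^4 ≤ l3 + l4)
    (hMA : |l1 - l2 - (2*(2*δA) + 2/3*(2*δA)^3)| ≤ 4*|2*δA|^5)
    (hMB : |l3 - l4 - (2*(2*δB) + 2/3*(2*δB)^3)| ≤ 4*|2*δB|^5) :
    (1/2 + δI) * (l1 - l3) + (1/2 - δI) * (l2 - l4) ≤ 11 * d ^ 2 := by
  obtain ⟨hA1, hA2⟩ := abs_le.1 hA
  obtain ⟨hB1, hB2⟩ := abs_le.1 hB
  obtain ⟨hI1, hI2⟩ := abs_le.1 hI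
  have haa : |2*δA| ≤ 2*d := by rw [abs_mul, abs_two]; linarith [abs_nonneg δA]
  have hbb : |2*δB| ≤ 2*d := by rw [abs_mul, abs_two]; linarith [abs_nonneg δB]
  have h5A : |2*δA|^5 ≤ (2*d)^5 := pow_le_pow_left₀ (abs_nonneg _) haa 5
  have h5B : |2*δB|^5 ≤ (2*d)^5 := pow_le_pow_left₀ (abs_nonneg _) hbb 5
  have hdiff : |(l1 - l2) - (l3 - l4) - ((2*(2*δA) + 2/3*(2*δA)^3) - (2*(2*δB) + 2/3*(2*δB)^3))|
      ≤ 256*d^5 := by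
    have heq : (l1 - l2) - (l3 - l4) - ((2*(2*δA) + 2/3*(2*δA)^3) - (2*(2*δB) + 2/3*(2*δB)^3))
        = (l1 - l2 - (2*(2*δA) + 2/3*(2*δA)^3)) - (l3 - l4 - (2*(2*δB) + 2/3*(2*δB)^3)) := by ring
    rw [heq]
    calc |_ - _| ≤ |l1 - l2 - (2*(2*δA) + 2/3*(2*δA)^3)|
        + |l3 - l4 - (2*(2*δB) + 2/3*(2*δB)^3)| := abs_sub _ _
      _ ≤ 4*(2*d)^5 + 4*(2*d)^5 := by linarith
      _ = 256*d^5 := by ring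
  have hprod : δI * ((l1 - l2) - (l3 - l4))
      ≤ δI * ((2*(2*δA) + 2/3*(2*δA)^3) - (2*(2*δB) + 2/3*(2*δB)^3)) + 256*d^6 := by
    have h2 : δI * (((l1 - l2) - (l3 - l4)) - ((2*(2*δA) + 2/3*(2*δA)^3) - (2*(2*δB) + 2/3*(2*δB)^3)))
        ≤ |δI| * |((l1 - l2) - (l3 - l4)) - ((2*(2*δA) + 2/3*(2*δA)^3) - (2*(2*δB) + 2/3*(2*δB)^3))| := by
      rw [← abs_mul]; exact le_abs_self _
    have h3 : |δI| * |((l1 - l2) - (l3 - l4)) - ((2*(2*δA) + 2/3*(2*δA)^3) - (2*(2*δB) + 2/3*(2*δB)^3))|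
        ≤ d * (256*d^5) := mul_le_mul hI hdiff (abs_nonneg _) hd0.le
    nlinarith [h2, h3]
  have hcube : δI * ((2*(2*δA) + 2/3*(2*δA)^3) - (2*(2*δB) + 2/3*(2*δB)^3))
      ≤ 4*δI*(δA - δB) + 32/3*d^4 := by
    have h1 : δI * ((2*(2*δA) + 2/3*(2*δA)^3) - (2*(2*δB) + 2/3*(2*δB)^3)) - 4*δI*(δA - δB)
        = δI * (16/3*(δA^3 - δB^3)) := by ring
    have h2 : δI * (16/3*(δA^3 - δB^3)) ≤ |δI| * |16/3*(δA^3 - δB^3)| := by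
      rw [← abs_mul]; exact le_abs_self _
    have h3 : |16/3*(δA^3 - δB^3)| ≤ 16/3 * (|δA|^3 + |δB|^3) := by
      rw [abs_mul]
      have habs : |δA^3 - δB^3| ≤ |δA^3| + |δB^3| := abs_sub _ _
      rw [abs_pow, abs_pow] at habs
      have h16 : |(16:ℝ)/3| = 16/3 := by norm_num
      rw [h16]
      linarith
    have h4 : |δA|^3 ≤ d^3 := pow_le_pow_left₀ (abs_nonneg _) hA 3
    have h5 : |δB|^3 ≤ d^3 := pow_le_pow_left₀ (abs_nonneg _) hB 3
    have h6 : |δI| * |16/3*(δA^3 - δB^3)| ≤ d * (16/3 * (2*d^3)) :=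
      mul_le_mul hI (by linarith) (abs_nonneg _) hd0.le
    nlinarith [h1, h2, h3, h6]
  have hquad : 4*δI*(δA - δB) + (-2*δA^2 + 2*δB^2) ≤ 8*d^2 := by
    nlinarith [sq_nonneg (δI - δA), mul_nonneg (by linarith : (0:ℝ) ≤ d - δI) (by linarith : (0:ℝ) ≤ d + δB),
      mul_nonneg (by linarith : (0:ℝ) ≤ d + δI) (by linarith : (0:ℝ) ≤ d - δB),
      mul_nonneg (by linarith : (0:ℝ) ≤ d - δB) (by linarith : (0:ℝ) ≤ d + δB),
      mul_nonneg (by linarith : (0:ℝ) ≤ d - δI) (by linarith : (0:ℝ) ≤ d + δI)]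
  have hB2 : δB^2 ≤ d^2 := by nlinarith
  have hd2' : d^2 ≤ 1/16 := by nlinarith
  have hd4 : d^4 ≤ 1/16 * d^2 := by nlinarith [sq_nonneg d, sq_nonneg (d^2)]
  have hB4 : δB^4 ≤ d^4 := by nlinarith [sq_nonneg δB, sq_nonneg d]
  have hd4'' : d^4 ≤ 1/256 := by
    nlinarith [mul_nonneg (by linarith : (0:ℝ) ≤ 1/16 - d^2) (by positivity : (0:ℝ) ≤ d^2 + 1/16)]
  have hd6 : 256*d^6 ≤ d^2 := by
    nlinarith [mul_le_mul_of_nonneg_right hd4'' (sq_nonneg d)]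
  have expand : (1/2 + δI) * (l1 - l3) + (1/2 - δI) * (l2 - l4)
      = 1/2 * ((l1 + l2) - (l3 + l4)) + δI * ((l1 - l2) - (l3 - l4)) := by ring
  rw [expand]
  have eA : (2*δA)^2 = 4*δA^2 := by ring
  have eB : (2*δB)^2 = 4*δB^2 := by ring
  have eB4 : (2*δB)^4 = 16*δB^4 := by ring
  rw [eA] at hPA
  rw [eB, eB4] at hPB
  have hS : 1/2 * ((l1 + l2) - (l3 + l4)) ≤ -2*δA^2 + 2*δB^2 + 32/3*δB^4 := by linarith
  linarith [sq_nonneg d]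

/-- Let `0 < d ≤ 1/4` and `|δ_A|, |δ_B|, |δ_I| ≤ d`. Then
`(1/2 + δ_I)·ln((1+2δ_A)/(1+2δ_B)) + (1/2 − δ_I)·ln((1−2δ_A)/(1−2δ_B)) ≤ 11 d²`. -/
theorem expected_log_ratio_le (d δA δB δI : ℝ) (hd0 : 0 < d) (hd1 : d ≤ 1/4)
    (hA : |δA| ≤ d) (hB : |δB| ≤ d) (hI : |δI| ≤ d) :
    (1/2 + δI) * Real.log ((1 + 2 * δA) / (1 + 2 * δB))
      + (1/2 - δI) * Real.log ((1 - 2 * δA) / (1 - 2 * δB)) ≤ 11 * d ^ 2 := by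
  obtain ⟨hA1, hA2⟩ := abs_le.1 hA
  obtain ⟨hB1, hB2⟩ := abs_le.1 hB
  have ha2 : |2*δA| ≤ 1/2 := by rw [abs_mul, abs_two]; linarith [abs_nonneg δA, (abs_le.1 hA).1, hA]
  have hb2 : |2*δB| ≤ 1/2 := by rw [abs_mul, abs_two]; linarith [abs_nonneg δB]
  obtain ⟨ha21, ha22⟩ := abs_le.1 ha2
  obtain ⟨hb21, hb22⟩ := abs_le.1 hb2
  rw [Real.log_div (by linarith) (by linarith), Real.log_div (by linarith) (by linarith)]
  exact core_arith d δA δB δI _ _ _ _ hd0 hd1 hA hB hI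
    (log_sum_le (2*δA) ha2) (log_sum_ge (2*δB) hb2)
    (log_diff_bound (2*δA) ha2) (log_diff_bound (2*δB) hb2)
end

section
/- Fix integers L ≥ 2 and ℓ with 1 ≤ ℓ ≤ L, let ε = 1/10 and λ = 10^{−6}, and let n be a positive integer with n ≤ λ·16^ℓ/log₂L. Then for any deterministic single-agent algorithm f, any pair of instances A, B ∈ 𝓘_ℓ, and any set G of transcripts of length n, it holds that P_{A,f,n}({γ ∈ G : E(γ) holds}) ≤ e^{2ε} · P_{B,f,n}({γ ∈ G : E(γ) holds}). -/
open scoped Classical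

/-- The probability `P_{I,f,n}(γ)` that running the deterministic single-agent
algorithm `f` (mapping each history to the next arm) on the instance with
means `μ` produces the transcript `γ`. -/
def transcriptProb (μ : Fin 2 → ℝ) (f : List (Fin 2 × Bool) → Fin 2)
    (γ : List (Fin 2 × Bool)) : ℝ :=
  ∏ t : Fin γ.length,
    (if (γ.get t).1 = f (γ.take t) then
      (if (γ.get t).2 then μ (γ.get t).1 else 1 - μ (γ.get t).1) else 0)

/-- The event `E(γ)` (with `ε = 1/10`, `λ = 10⁻⁶`): for every `1 ≤ ℓ' ≤ L` with
`λ·16^{ℓ'}/log₂ L ≥ |γ|` and every pair `A', B' ∈ 𝓘_{ℓ'}` with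
`g_{A'}(γ), g_{B'}(γ) > 0`, one has `ln(g_{A'}(γ)/g_{B'}(γ)) ≤ 2ε`. -/
def eventE (L : ℕ) (γ : List (Fin 2 × Bool)) : Prop :=
  ∀ ℓ' : ℕ, 1 ≤ ℓ' → ℓ' ≤ L →
    (γ.length : ℝ) ≤ (10 : ℝ)⁻¹ ^ 6 * 16 ^ ℓ' / Real.logb 2 L →
    ∀ A' B' : Fin 2 → ℝ, A' ∈ hardFamily L ℓ' → B' ∈ hardFamily L ℓ' →
      0 < gI A' γ → 0 < gI B' γ →
        Real.log (gI A' γ / gI B' γ) ≤ 2 * (1/10 : ℝ)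


lemma hard_mem_pos {L ℓ : ℕ} {μ : Fin 2 → ℝ} (hℓ1 : 1 ≤ ℓ)
    (hμ : μ ∈ hardFamily L ℓ) (i : Fin 2) : 0 < μ i ∧ μ i < 1 := by
  obtain ⟨ℓ', hℓℓ', -, σ, hσ, h0, h1⟩ := hμ
  have h4 : (4:ℝ) ≤ 4 ^ ℓ' := by
    calc (4:ℝ) = 4 ^ 1 := (pow_one 4).symm
    _ ≤ 4 ^ ℓ' := pow_le_pow_right₀ (by norm_num) (hℓ1.trans hℓℓ')
  have h4p : (0:ℝ) < 4 ^ ℓ' := by positivity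
  have hub : 1 / (4:ℝ) ^ ℓ' ≤ 1/4 := by
    apply one_div_le_one_div_of_le (by norm_num) h4
  have hlb : (0:ℝ) < 1 / (4:ℝ) ^ ℓ' := by positivity
  fin_cases i <;> rcases hσ with rfl | rfl <;>
    simp only [Fin.mk_zero, Fin.mk_one, h0, h1, neg_div] <;> constructor <;> linarith

lemma gI_pos {L ℓ : ℕ} {μ : Fin 2 → ℝ} (hℓ1 : 1 ≤ ℓ)
    (hμ : μ ∈ hardFamily L ℓ) (γ : List (Fin 2 × Bool)) : 0 < gI μ γ := by
  apply List.prod_pos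
  intro x hx
  rw [List.mem_map] at hx
  obtain ⟨p, -, rfl⟩ := hx
  obtain ⟨h1, h2⟩ := hard_mem_pos hℓ1 hμ p.1
  split
  · exact h1
  · exact sub_pos.mpr h2

lemma transcriptProb_eq (μ : Fin 2 → ℝ) (f : List (Fin 2 × Bool) → Fin 2)
    (γ : List (Fin 2 × Bool)) :
    transcriptProb μ f γ =
      if ∀ t : Fin γ.length, (γ.get t).1 = f (γ.take t) then gI μ γ else 0 := by
  by_cases h : ∀ t : Fin γ.length, (γ.get t).1 = f (γ.take t)
  · rw [if_pos h, transcriptProb]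
    have : ∀ t : Fin γ.length,
        (if (γ.get t).1 = f (γ.take t) then
          (if (γ.get t).2 then μ (γ.get t).1 else 1 - μ (γ.get t).1) else 0)
        = (if (γ.get t).2 then μ (γ.get t).1 else 1 - μ (γ.get t).1) := by
      intro t; rw [if_pos (h t)]
    rw [Finset.prod_congr rfl (fun t _ => this t), gI]
    conv_rhs => rw [← List.ofFn_get γ, List.map_ofFn, List.prod_ofFn]
    simp [Function.comp]
  · rw [if_neg h, transcriptProb]
    push_neg at h
    obtain ⟨t, ht⟩ := h
    exact Finset.prod_eq_zero (Finset.mem_univ t) (if_neg ht)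

/-- Fix `L ≥ 2`, `1 ≤ ℓ ≤ L`, `ε = 1/10`, `λ = 10⁻⁶`, and a positive `n` with
`n ≤ λ·16^ℓ/log₂ L`. For any deterministic single-agent algorithm `f`, any
`A, B ∈ 𝓘_ℓ` and any set `G` of transcripts of length `n`,
`P_{A,f,n}(G ∧ E) ≤ e^{2ε} · P_{B,f,n}(G ∧ E)`. -/
theorem indistinguishable (L ℓ n : ℕ) (hL : 2 ≤ L) (hℓ1 : 1 ≤ ℓ) (hℓL : ℓ ≤ L)
    (hn : 1 ≤ n) (hnle : (n : ℝ) ≤ (10 : ℝ)⁻¹ ^ 6 * 16 ^ ℓ / Real.logb 2 L)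
    (f : List (Fin 2 × Bool) → Fin 2) (A B : Fin 2 → ℝ)
    (hA : A ∈ hardFamily L ℓ) (hB : B ∈ hardFamily L ℓ)
    (G : Set (Fin n → Fin 2 × Bool)) :
    (∑ γ : Fin n → Fin 2 × Bool,
        (if γ ∈ G ∧ eventE L (List.ofFn γ) then transcriptProb A f (List.ofFn γ) else 0))
      ≤ Real.exp (2 * (1/10 : ℝ)) *
        ∑ γ : Fin n → Fin 2 × Bool,
          (if γ ∈ G ∧ eventE L (List.ofFn γ) then transcriptProb B f (List.ofFn γ) else 0) := by
  rw [Finset.mul_sum]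
  apply Finset.sum_le_sum
  intro γ _
  by_cases h : γ ∈ G ∧ eventE L (List.ofFn γ)
  · rw [if_pos h, if_pos h]
    set l := List.ofFn γ with hl
    have hlen : (l.length : ℝ) ≤ (10 : ℝ)⁻¹ ^ 6 * 16 ^ ℓ / Real.logb 2 L := by
      rw [hl, List.length_ofFn]; exact hnle
    have hApos := gI_pos hℓ1 hA l
    have hBpos := gI_pos hℓ1 hB l
    have hlog := h.2 ℓ hℓ1 hℓL hlen A B hA hB hApos hBpos
    have hdiv : gI A l / gI B l ≤ Real.exp (2 * (1/10 : ℝ)) :=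
      (Real.log_le_iff_le_exp (div_pos hApos hBpos)).mp hlog
    have key : gI A l ≤ Real.exp (2 * (1/10 : ℝ)) * gI B l :=
      (div_le_iff₀ hBpos).mp hdiv
    rw [transcriptProb_eq, transcriptProb_eq]
    split_ifs with hc
    · exact key
    · simp
  · rw [if_neg h, if_neg h]; simp
end
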